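/- (Proposition 6, backward preservation) Let ⟨Δ_g, Δ_d, J, I⟩ be a default acceptable state with input structure I_in, and let I' be a structure with I' <_p I (strictly less precise than I) that still expands I_in. Then ⟨Δ_g, Δ_d, J, I'⟩ is a default acceptable state. -/
import Mathlib


namespace LazyMX

/-- The four truth values: true, false, unknown, inconsistent. -/
inductive TV : Type where
  | t | f | u | i
deriving DecidableEq

namespace TV

/-- The truth order `f <_t u <_t t`, `f <_t i <_t t`. -/
def truthLe (a b : TV) : Prop := a = b ∨ a = f ∨ b = t

/-- The precision order `u <_p t <_p i`, `u <_p f <_p i`. -/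
def precLe (a b : TV) : Prop := a = b ∨ a = u ∨ b = i

/-- The inverse of a truth value. -/
def inv : TV → TV
  | t => f
  | f => t
  | u => u
  | i => i

open Classical in
/-- Greatest lower bound of a set of truth values w.r.t. the truth order. -/
noncomputable def sInf (S : Set TV) : TV :=
  if f ∈ S ∨ (u ∈ S ∧ i ∈ S) then f
  else if u ∈ S then u
  else if i ∈ S then i
  else t

open Classical in
/-- Least upper bound of a set of truth values w.r.t. the truth order. -/
noncomputable def sSup (S : Set TV) : TV :=
  if t ∈ S ∨ (u ∈ S ∧ i ∈ S) then t
  else if u ∈ S then u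
  else if i ∈ S then i
  else f

/-- Minimum (meet) of two truth values under the truth order. -/
noncomputable def tmin (a b : TV) : TV := sInf {a, b}

/-- Maximum (join) of two truth values under the truth order. -/
noncomputable def tmax (a b : TV) : TV := sSup {a, b}

end TV

/-- A (function-free) vocabulary: a type of predicate symbols with arities. -/
structure Voc : Type 1 where
  Pred : Type
  arity : Pred → ℕ

/-- A domain atom `P(d₁,…,dₙ)`. -/
structure Atom (σ : Voc) (D : Type) : Type where
  pred : σ.Pred
  args : Fin (σ.arity pred) → D

/-- A domain literal: an atom or its negation. -/
inductive Lit (σ : Voc) (D : Type) : Type where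
  | pos : Atom σ D → Lit σ D
  | neg : Atom σ D → Lit σ D

namespace Lit
variable {σ : Voc} {D : Type}

def atom : Lit σ D → Atom σ D
  | pos a => a
  | neg a => a

def negate : Lit σ D → Lit σ D
  | pos a => neg a
  | neg a => pos a

def isNeg : Lit σ D → Prop
  | pos _ => False
  | neg _ => True

/-- The truth value a literal asks for: `t` for a positive, `f` for a negative literal. -/
def sign : Lit σ D → TV
  | pos _ => TV.t
  | neg _ => TV.f

end Lit

/-- A four-valued structure with domain `D`: an assignment of truth values to domain atoms. -/
def Struct (σ : Voc) (D : Type) : Type := Atom σ D → TV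

variable {σ : Voc} {D : Type}

def TwoValued (I : Struct σ D) : Prop := ∀ a, I a = TV.t ∨ I a = TV.f

def ThreeValued (I : Struct σ D) : Prop := ∀ a, I a ≠ TV.i

/-- `J` expands `I` (`I ≤_p J` pointwise). -/
def ExpandsS (I J : Struct σ D) : Prop := ∀ a, TV.precLe (I a) (J a)

/-- A set of domain literals is consistent if no atom occurs both positively and negatively. -/
def ConsistentSet (S : Set (Lit σ D)) : Prop := ∀ a, ¬ (Lit.pos a ∈ S ∧ Lit.neg a ∈ S)

open Classical in
/-- The four-valued structure corresponding to a set of domain literals. -/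
noncomputable def toStruct (S : Set (Lit σ D)) : Struct σ D := fun a =>
  if Lit.pos a ∈ S then (if Lit.neg a ∈ S then TV.i else TV.t)
  else (if Lit.neg a ∈ S then TV.f else TV.u)

/-- A literal is true in a structure. -/
def litTrue (I : Struct σ D) : Lit σ D → Prop
  | Lit.pos a => I a = TV.t
  | Lit.neg a => I a = TV.f

/-- A literal is false in a structure. -/
def litFalse (I : Struct σ D) : Lit σ D → Prop
  | Lit.pos a => I a = TV.f
  | Lit.neg a => I a = TV.t

/-- First-order formulas over domain atoms, with quantifiers ranging over explicitly
given subsets of the domain; quantified bodies are represented as `D`-indexed families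
(`b d` is the instance `φ[x↦d]`). -/
inductive Formula (σ : Voc) (D : Type) : Type where
  | atom : Atom σ D → Formula σ D
  | not : Formula σ D → Formula σ D
  | and : Formula σ D → Formula σ D → Formula σ D
  | or : Formula σ D → Formula σ D → Formula σ D
  | all : Set D → (D → Formula σ D) → Formula σ D
  | ex : Set D → (D → Formula σ D) → Formula σ D

/-- The standard four-valued truth assignment. -/
noncomputable def Formula.eval (I : Struct σ D) : Formula σ D → TV
  | Formula.atom a => I a
  | Formula.not φ => (φ.eval I).inv
  | Formula.and φ ψ => TV.tmin (φ.eval I) (ψ.eval I)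
  | Formula.or φ ψ => TV.tmax (φ.eval I) (ψ.eval I)
  | Formula.all D' b => TV.sInf { v | ∃ d ∈ D', (b d).eval I = v }
  | Formula.ex D' b => TV.sSup { v | ∃ d ∈ D', (b d).eval I = v }

/-- The predicate symbols occurring in a formula. -/
def Formula.preds : Formula σ D → Set σ.Pred
  | Formula.atom a => {a.pred}
  | Formula.not φ => φ.preds
  | Formula.and φ ψ => φ.preds ∪ ψ.preds
  | Formula.or φ ψ => φ.preds ∪ ψ.preds
  | Formula.all _ b => ⋃ d, (b d).preds
  | Formula.ex _ b => ⋃ d, (b d).preds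

/-- A rule `∀ x̄ ∈ D̄ : P(x̄) ← φ`; `body d̄` is the instantiated body `φ[x̄↦d̄]`. -/
structure Rule (σ : Voc) (D : Type) : Type where
  head : σ.Pred
  dom : Set (Fin (σ.arity head) → D)
  body : (Fin (σ.arity head) → D) → Formula σ D

/-- A definition: a set of rules. -/
abbrev Defn (σ : Voc) (D : Type) := Set (Rule σ D)

/-- The rule `r` defines the atom `a`. -/
def Rule.defines (r : Rule σ D) (a : Atom σ D) : Prop :=
  ∃ d ∈ r.dom, a = ⟨r.head, d⟩

def definedAtom (Δ : Defn σ D) (a : Atom σ D) : Prop := ∃ r ∈ Δ, r.defines a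

def openAtom (Δ : Defn σ D) (a : Atom σ D) : Prop := ¬ definedAtom Δ a

def definedLit (Δ : Defn σ D) (l : Lit σ D) : Prop := definedAtom Δ l.atom

def openLit (Δ : Defn σ D) (l : Lit σ D) : Prop := ¬ definedAtom Δ l.atom

/-- Each domain atom is defined by at most one rule. -/
def WellFormed (Δ : Defn σ D) : Prop :=
  ∀ a r₁ r₂, r₁ ∈ Δ → r₂ ∈ Δ → r₁.defines a → r₂.defines a → r₁ = r₂

/-- The value of the body of the rule instance defining `a`, evaluated in `I`. -/
noncomputable def bodyVal (Δ : Defn σ D) (I : Struct σ D) (a : Atom σ D) : TV :=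
  TV.sSup { v | ∃ r ∈ Δ, ∃ d ∈ r.dom, a = ⟨r.head, d⟩ ∧ (r.body d).eval I = v }

open Classical in
/-- Combine a lower set `x` and an upper set `y` of defined atoms with an interpretation
`Io` of the open atoms into a four-valued structure. -/
noncomputable def combine (Δ : Defn σ D) (Io : Struct σ D) (x y : Set (Atom σ D)) :
    Struct σ D := fun a =>
  if definedAtom Δ a then
    (if a ∈ x then (if a ∈ y then TV.t else TV.i) else (if a ∈ y then TV.u else TV.f))
  else Io a

/-- Lower component of the four-valued immediate consequence operator. -/
def lowerOp (Δ : Defn σ D) (Io : Struct σ D) (x y : Set (Atom σ D)) : Set (Atom σ D) :=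
  { a | definedAtom Δ a ∧
      (bodyVal Δ (combine Δ Io x y) a = TV.t ∨ bodyVal Δ (combine Δ Io x y) a = TV.i) }

/-- Upper component of the four-valued immediate consequence operator. -/
def upperOp (Δ : Defn σ D) (Io : Struct σ D) (x y : Set (Atom σ D)) : Set (Atom σ D) :=
  { a | definedAtom Δ a ∧
      (bodyVal Δ (combine Δ Io x y) a = TV.t ∨ bodyVal Δ (combine Δ Io x y) a = TV.u) }

/-- Stable revision, lower half: least fixpoint of the lower operator with `y` fixed. -/
def stableLower (Δ : Defn σ D) (Io : Struct σ D) (y : Set (Atom σ D)) : Set (Atom σ D) :=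
  ⋂₀ { x | lowerOp Δ Io x y ⊆ x }

/-- Stable revision, upper half: least fixpoint of the upper operator with `x` fixed. -/
def stableUpper (Δ : Defn σ D) (Io : Struct σ D) (x : Set (Atom σ D)) : Set (Atom σ D) :=
  ⋂₀ { y | upperOp Δ Io x y ⊆ y }

/-- Precision-prefixpoints of the stable revision operator. -/
def wfPrefixpoints (Δ : Defn σ D) (Io : Struct σ D) :
    Set (Set (Atom σ D) × Set (Atom σ D)) :=
  { p | stableLower Δ Io p.2 ⊆ p.1 ∧ p.2 ⊆ stableUpper Δ Io p.1 }

/-- Lower half of the well-founded fixpoint (the precision-least fixpoint of stable revision). -/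
def wfLower (Δ : Defn σ D) (Io : Struct σ D) : Set (Atom σ D) :=
  ⋂₀ (Prod.fst '' wfPrefixpoints Δ Io)

/-- Upper half of the well-founded fixpoint. -/
def wfUpper (Δ : Defn σ D) (Io : Struct σ D) : Set (Atom σ D) :=
  ⋃₀ (Prod.snd '' wfPrefixpoints Δ Io)

/-- The (parametrized) well-founded model `wf_Δ(Io|open(Δ))` of `Δ`; it agrees with `Io`
on the open atoms and is the well-founded fixpoint on the defined atoms. -/
noncomputable def wfModel (Δ : Defn σ D) (Io : Struct σ D) : Struct σ D :=
  combine Δ Io (wfLower Δ Io) (wfUpper Δ Io)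

/-- A two-valued structure is a model of the definition `Δ` if it equals the well-founded
model of `Δ` relative to its restriction to the open atoms. -/
def IsModelOfDef (I : Struct σ D) (Δ : Defn σ D) : Prop :=
  TwoValued I ∧ ∀ a, I a = wfModel Δ I a

/-- `Δ` is total: the well-founded model is two-valued for every two-valued
interpretation of the open atoms. -/
def IsTotalDef (Δ : Defn σ D) : Prop :=
  ∀ Io : Struct σ D, TwoValued Io → TwoValued (wfModel Δ Io)

/-- A model of the canonical theory `{P_t, Δ}`. -/
def IsModelOfTheory (I : Struct σ D) (pt : Atom σ D) (Δ : Defn σ D) : Prop :=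
  IsModelOfDef I Δ ∧ I pt = TV.t

/-- A direct justification for a defined literal `l`: a consistent nonempty set `S` of
domain literals making the body of the rule instance defining `l.atom` true
(for positive `l`) resp. false (for negative `l`). -/
def IsDirectJust (Δ : Defn σ D) (l : Lit σ D) (S : Set (Lit σ D)) : Prop :=
  ConsistentSet S ∧ S.Nonempty ∧
    ∃ r ∈ Δ, ∃ d ∈ r.dom, l.atom = ⟨r.head, d⟩ ∧ (r.body d).eval (toStruct S) = l.sign

/-- A justification over `Δ`: a graph assigning to each literal either no children or a
direct justification. -/
def IsJustification (Δ : Defn σ D) (J : Lit σ D → Set (Lit σ D)) : Prop :=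
  ∀ l, J l = ∅ ∨ IsDirectJust Δ l (J l)

/-- Reachability in the justification graph. -/
def Reach (J : Lit σ D → Set (Lit σ D)) : Lit σ D → Lit σ D → Prop :=
  Relation.ReflTransGen (fun x y => y ∈ J x)

/-- The nodes of the subgraph `J_L` reachable from the set `L` of literals. -/
def reachSet (J : Lit σ D → Set (Lit σ D)) (L : Set (Lit σ D)) : Set (Lit σ D) :=
  { x | ∃ l ∈ L, Reach J l x }

/-- `J` is total for `L`: `J` is defined in every defined literal reachable from `L`. -/
def TotalFor (Δ : Defn σ D) (J : Lit σ D → Set (Lit σ D)) (L : Set (Lit σ D)) : Prop :=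
  ∀ x ∈ reachSet J L, definedLit Δ x → J x ≠ ∅

/-- An infinite path in the subgraph `J_l`. -/
def IsInfPathFrom (J : Lit σ D → Set (Lit σ D)) (l : Lit σ D) (p : ℕ → Lit σ D) : Prop :=
  Reach J l (p 0) ∧ ∀ n, p (n + 1) ∈ J (p n)

/-- `l` is well-founded in `J`: every infinite path in `J_l` is negative. -/
def WellFoundedIn (J : Lit σ D → Set (Lit σ D)) (l : Lit σ D) : Prop :=
  ∀ p : ℕ → Lit σ D, IsInfPathFrom J l p → ∀ n, (p n).isNeg

/-- `J` justifies `L`: `J_L` is total for `L`, every literal of `L` is well-founded,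
and the set of literals in `J_L` is consistent. -/
def Justifies (Δ : Defn σ D) (J : Lit σ D → Set (Lit σ D)) (L : Set (Lit σ D)) : Prop :=
  TotalFor Δ J L ∧ (∀ l ∈ L, WellFoundedIn J l) ∧ ConsistentSet (reachSet J L)

/-- The part of `J` on the nodes `N` is consistent with the literal-set structure `I`:
`I` is consistent and no literal of `N` in which `J` is defined is false in `I`. -/
def ConsistentWithOn (J : Lit σ D → Set (Lit σ D)) (N I : Set (Lit σ D)) : Prop :=
  ConsistentSet I ∧ ∀ l ∈ N, J l ≠ ∅ → l.negate ∉ I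

/-- The predicate symbols occurring in a definition. -/
def vocDef (Δ : Defn σ D) : Set σ.Pred :=
  { P | ∃ r ∈ Δ, r.head = P } ∪ { P | ∃ r ∈ Δ, ∃ d ∈ r.dom, P ∈ (r.body d).preds }

open Classical in
/-- Restriction of a structure to the symbols in `s` (everything else becomes unknown). -/
noncomputable def restrictP (s : Set σ.Pred) (I : Struct σ D) : Struct σ D :=
  fun a => if a.pred ∈ s then I a else TV.u

open Classical in
/-- Restriction of a structure to a set of atoms (everything else becomes unknown). -/
noncomputable def restrictA (A : Set (Atom σ D)) (I : Struct σ D) : Struct σ D :=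
  fun a => if a ∈ A then I a else TV.u

/-- Strong `s`-equivalence of two classes of models: each model of one, restricted to `s`,
expands in a unique way to a model of the other. -/
def StronglyEquivModels (s : Set σ.Pred) (M M' : Set (Struct σ D)) : Prop :=
  (∀ I ∈ M, ∃! I', I' ∈ M' ∧ ExpandsS (restrictP s I) I') ∧
  (∀ I' ∈ M', ∃! I, I ∈ M ∧ ExpandsS (restrictP s I') I)

/-- Strong `s`-equivalence of two definitions. -/
def StronglyEquivDef (s : Set σ.Pred) (Δ₁ Δ₂ : Defn σ D) : Prop :=
  StronglyEquivModels s { I | IsModelOfDef I Δ₁ } { I | IsModelOfDef I Δ₂ }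

/-- A (two-valued) structure expands a literal-set structure. -/
def expandsLit (Iin : Set (Lit σ D)) (M : Struct σ D) : Prop := ∀ l ∈ Iin, litTrue M l

/-- Strong `s`-equivalence of two definitions in the input structure `Iin`. -/
def StronglyEquivDefIn (s : Set σ.Pred) (Iin : Set (Lit σ D)) (Δ₁ Δ₂ : Defn σ D) : Prop :=
  StronglyEquivModels s { I | IsModelOfDef I Δ₁ ∧ expandsLit Iin I }
    { I | IsModelOfDef I Δ₂ ∧ expandsLit Iin I }

/-- The domain atom of a 0-ary predicate symbol. -/
def ptAtom (σ : Voc) (D : Type) (Pt : σ.Pred) (h : σ.arity Pt = 0) : Atom σ D :=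
  ⟨Pt, fun j => Fin.elim0 (h ▸ j)⟩

/-- An acceptable state `⟨Δg, Δd, J, I⟩` for the canonical theory `{P_t, Δ}` with input
structure `Iin`. -/
structure AcceptableState (Δ : Defn σ D) (Iin : Set (Lit σ D))
    (Δg Δd : Defn σ D) (J : Lit σ D → Set (Lit σ D)) (I : Set (Lit σ D)) : Prop where
  wf_gd : WellFormed (Δg ∪ Δd)
  wf_g : WellFormed Δg
  wf_d : WellFormed Δd
  total_gd : IsTotalDef (Δg ∪ Δd)
  total_g : IsTotalDef Δg
  total_d : IsTotalDef Δd
  equiv : StronglyEquivDef (vocDef Δ) (Δg ∪ Δd) Δ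
  disj : ∀ a, ¬ (definedAtom Δg a ∧ definedAtom Δd a)
  just : IsJustification (Δg ∪ Δd) J
  expands : Iin ⊆ I
  justified : Justifies (Δg ∪ Δd) J { l | l ∈ I ∧ definedLit Δd l }
  consistentWith : ConsistentWithOn J (reachSet J { l | l ∈ I ∧ definedLit Δd l }) I

/-- A default acceptable state. -/
structure DefaultAcceptableState (Δ : Defn σ D) (Iin : Set (Lit σ D))
    (Δg Δd : Defn σ D) (J : Lit σ D → Set (Lit σ D)) (I : Set (Lit σ D))
    extends AcceptableState Δ Iin Δg Δd J I : Prop where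
  dj_open_or_defd : ∀ l l', l' ∈ J l → openLit (Δg ∪ Δd) l' ∨ definedLit Δd l'
  justifies_defined : Justifies (Δg ∪ Δd) J { l | J l ≠ ∅ }

/-- A model of a theory (list of sentences plus a definition) relative to a vocabulary `s`:
two-valued on `s`, unknown outside `s`, satisfying all sentences and the definition. -/
def IsModelOfTOn (s : Set σ.Pred) (M : Struct σ D) (φs : List (Formula σ D))
    (Δ : Defn σ D) : Prop :=
  (∀ a : Atom σ D, a.pred ∈ s → M a = TV.t ∨ M a = TV.f) ∧
  (∀ a : Atom σ D, a.pred ∉ s → M a = TV.u) ∧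
  (∀ φ ∈ φs, φ.eval M = TV.t) ∧
  (∀ a : Atom σ D, a.pred ∈ s → M a = wfModel Δ M a)

/-- A model of a canonical theory `{pt, Δ}` relative to a vocabulary `s`. -/
def IsModelOfCanonOn (s : Set σ.Pred) (M : Struct σ D) (pt : Atom σ D)
    (Δ : Defn σ D) : Prop :=
  (∀ a : Atom σ D, a.pred ∈ s → M a = TV.t ∨ M a = TV.f) ∧
  (∀ a : Atom σ D, a.pred ∉ s → M a = TV.u) ∧
  M pt = TV.t ∧
  (∀ a : Atom σ D, a.pred ∈ s → M a = wfModel Δ M a)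

/-- A model of a definition relative to a vocabulary `s`: two-valued on `s`,
unknown outside `s`, and satisfying the well-founded-model equation on `s`. -/
def IsModelOfDefOn (s : Set σ.Pred) (I : Struct σ D) (Δ : Defn σ D) : Prop :=
  (∀ a : Atom σ D, a.pred ∈ s → I a = TV.t ∨ I a = TV.f) ∧
  (∀ a : Atom σ D, a.pred ∉ s → I a = TV.u) ∧
  (∀ a : Atom σ D, a.pred ∈ s → I a = wfModel Δ I a)

/-- Proposition 6, backward preservation: replacing the structure of a
default acceptable state by a strictly less precise one that still expands the input
structure preserves default acceptability. -/
theorem default_acceptable_backward (σ : Voc) (D : Type) [Nonempty D]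
    (Pt : σ.Pred) (hPt : σ.arity Pt = 0)
    (Δ : Defn σ D) (hΔ : WellFormed Δ) (htotΔ : IsTotalDef Δ)
    (hdef : definedAtom Δ (ptAtom σ D Pt hPt))
    (Iin : Set (Lit σ D)) (Δg Δd : Defn σ D)
    (J : Lit σ D → Set (Lit σ D)) (I I' : Set (Lit σ D))
    (hacc : DefaultAcceptableState Δ Iin Δg Δd J I)
    (hlt : I' ⊂ I) (hexp : Iin ⊆ I') :
    DefaultAcceptableState Δ Iin Δg Δd J I' := by
  have hsub : I' ⊆ I := hlt.1
  have hLsub : {l | l ∈ I' ∧ definedLit Δd l} ⊆ {l | l ∈ I ∧ definedLit Δd l} :=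
    fun l hl => ⟨hsub hl.1, hl.2⟩
  have hreach : reachSet J {l | l ∈ I' ∧ definedLit Δd l} ⊆
      reachSet J {l | l ∈ I ∧ definedLit Δd l} := by
    rintro x ⟨l, hl, hr⟩
    exact ⟨l, hLsub hl, hr⟩
  refine
    { wf_gd := hacc.wf_gd, wf_g := hacc.wf_g, wf_d := hacc.wf_d,
      total_gd := hacc.total_gd, total_g := hacc.total_g, total_d := hacc.total_d,
      equiv := hacc.equiv, disj := hacc.disj, just := hacc.just,
      expands := hexp,
      justified := ⟨fun x hx => hacc.justified.1 x (hreach hx),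
        fun l hl => hacc.justified.2.1 l (hLsub hl),
        fun a h => hacc.justified.2.2 a ⟨hreach h.1, hreach h.2⟩⟩,
      consistentWith := ⟨fun a h => hacc.consistentWith.1 a ⟨hsub h.1, hsub h.2⟩,
        fun l hl hne hmem => hacc.consistentWith.2 l (hreach hl) hne (hsub hmem)⟩,
      dj_open_or_defd := hacc.dj_open_or_defd,
      justifies_defined := hacc.justifies_defined }


end LazyMX
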